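/- (Good Triplets) Let ξ > 0, d > 0, δ > 0 and n ∈ ℕ with (dξ³ − δ)n/2 ≥ 1. Let H = (U ∪̇ V ∪̇ W, E) be a 3-graph on three pairwise disjoint vertex classes with |U| = |V| = |W| = n, and suppose that the triple (U, V, W) is weakly (δ, d)-quasirandom in H. Then at least (1 − ξ)·3n vertices of H can be covered by pairwise vertex-disjoint tight paths in H, each of length at least (dξ³ − δ)n/2 − 2. -/

import Mathlib

/-- `e(V₁, V₂, V₃)`: the number of triples `(v₁, v₂, v₃) ∈ V₁ × V₂ × V₃` with
`{v₁, v₂, v₃} ∈ E`. -/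
def tripleCount (E : Finset (Finset ℕ)) (V₁ V₂ V₃ : Finset ℕ) : ℕ :=
  ((V₁ ×ˢ V₂ ×ˢ V₃).filter fun t => ({t.1, t.2.1, t.2.2} : Finset ℕ) ∈ E).card

/-- `(V₁, V₂, V₃)` is weakly `(δ, d)`-quasirandom with respect to the edge set `E`. -/
def WeaklyQuasirandomWith (E : Finset (Finset ℕ)) (δ d : ℝ) (V₁ V₂ V₃ : Finset ℕ) : Prop :=
  ∀ U₁ ⊆ V₁, ∀ U₂ ⊆ V₂, ∀ U₃ ⊆ V₃,
    |(tripleCount E U₁ U₂ U₃ : ℝ) - d * U₁.card * U₂.card * U₃.card| ≤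
      δ * V₁.card * V₂.card * V₃.card

/-- `f` lists the `ℓ + 2` vertices of a tight path of length `ℓ` with vertices in
`Vs` and edges in `E`. -/
def IsTightPathIn (Vs : Finset ℕ) (E : Finset (Finset ℕ)) (ℓ : ℕ)
    (f : Fin (ℓ + 2) → ℕ) : Prop :=
  Function.Injective f ∧ (∀ i, f i ∈ Vs) ∧
  ∀ i : ℕ, ∀ h : i < ℓ,
    ({f ⟨i, by omega⟩, f ⟨i + 1, by omega⟩, f ⟨i + 2, by omega⟩} : Finset ℕ) ∈ E

/-!
Write `L = dξ³ - δ` and `t = ⌈L n / 6⌉`. As long as the uncovered parts `A ⊆ U`, `B ⊆ V`,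
`C ⊆ W` have a common size `m ≥ ξ n`, quasirandomness gives at least `d m³ - δ n³ ≥ L n³` edges
meeting each of `A`, `B`, `C` once. Repeatedly deleting the edges through a pair of vertices
that lies in fewer than `t` of them costs at most `t - 1` edges per pair, fewer than `L n³` in
total, so a nonempty subgraph survives in which every pair covered by an edge lies in at least
`t` edges. There a tight path running through `A, B, C, A, B, C, …` extends greedily to `3t`
vertices: its last two vertices lie in at least `t` edges, whose third vertices are distinct
and lie in the next part, where the path has used fewer than `t` vertices. Removing the path
takes exactly `t` vertices from each part, and the process stops only when `m < ξ n`, so the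
paths, each of length `3t - 2 ≥ L n / 2 - 2`, cover more than `3 (1 - ξ) n` vertices.
-/

open Finset Function

lemma pairwise_disjoint_vecCons_three {α : Type*} {U V W : Finset α} (hUV : Disjoint U V)
    (hUW : Disjoint U W) (hVW : Disjoint V W) :
    Pairwise (Disjoint on fun j : ZMod 3 => ![U, V, W] j) := by
  intro i j hij
  fin_cases i <;> fin_cases j <;> first | exact absurd rfl hij | simpa [onFun, disjoint_comm]

variable {α : Type*} [DecidableEq α]

lemma card_filter_range_natCast_eq (n t : ℕ) [NeZero n] (j : ZMod n) :
    #{i ∈ range (n * t) | ((i : ℕ) : ZMod n) = j} = t := by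
  have h := Nat.count_modEq_card (n * t) (NeZero.pos n) j.val
  simp_rw [Nat.count_eq_card_filter_range, ← ZMod.natCast_eq_natCast_iff,
    ZMod.natCast_zmod_val] at h
  simpa [Nat.mul_mod_right, NeZero.pos n] using h

lemma card_filter_range_natCast_eq_self_lt {n k t : ℕ} [NeZero n] (hk : k < n * t) :
    #{i ∈ range k | ((i : ℕ) : ZMod n) = k} < t := by
  have hsub : {i ∈ range k | ((i : ℕ) : ZMod n) = k} ⊆
      {i ∈ range (n * t) | ((i : ℕ) : ZMod n) = k}.erase k := by
    simp only [subset_iff, mem_filter, mem_range, mem_erase]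
    exact fun i ⟨hi, hik⟩ => ⟨by omega, by omega, hik⟩
  have := card_le_card hsub
  rw [card_erase_of_mem (by simp [hk]), card_filter_range_natCast_eq] at this
  have ht : t ≠ 0 := by
    rintro rfl
    simp at hk
  omega

theorem exists_subset_forall_le_codegree (t : ℕ) (P E₀ : Finset (Finset α))
    (hE₀ : ∀ e ∈ E₀, e.powersetCard 2 ⊆ P) :
    ∃ E ⊆ E₀, #E₀ ≤ #E + #P * (t - 1) ∧
      ∀ e ∈ E, ∀ p ∈ e.powersetCard 2, t ≤ #{g ∈ E | p ⊆ g} := by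
  induction P using Finset.strongInduction generalizing E₀ with
  | H P ih =>
  by_cases hgood : ∀ e ∈ E₀, ∀ p ∈ e.powersetCard 2, t ≤ #{g ∈ E₀ | p ⊆ g}
  · exact ⟨E₀, subset_rfl, le_self_add, hgood⟩
  push Not at hgood
  obtain ⟨e, he, p, hp, hlow⟩ := hgood
  have hpP : p ∈ P := hE₀ e he hp
  have hE₁ : ∀ g ∈ {g ∈ E₀ | ¬p ⊆ g}, g.powersetCard 2 ⊆ P.erase p := by
    intro g hg q hq
    rw [mem_filter] at hg
    refine mem_erase.mpr ⟨?_, hE₀ g hg.1 hq⟩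
    rintro rfl
    exact hg.2 (mem_powersetCard.mp hq).1
  obtain ⟨E, hE, hcard, hcodeg⟩ := ih (P.erase p) (erase_ssubset hpP) _ hE₁
  refine ⟨E, hE.trans (filter_subset _ _), ?_, hcodeg⟩
  have hsplit := card_filter_add_card_filter_not (s := E₀) (p := (p ⊆ ·))
  have hP : #P = #(P.erase p) + 1 := (card_erase_add_one hpP).symm
  rw [hP, add_one_mul]
  omega

def IsTransversal (X : ZMod 3 → Finset α) (e : Finset α) : Prop :=
  ∃ a : ZMod 3 → α, (∀ j, a j ∈ X j) ∧ e = univ.image a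

section Transversal

variable {X : ZMod 3 → Finset α} {e : Finset α}

lemma eq_apply_of_mem_image_univ (hX : Pairwise (Disjoint on X)) {a : ZMod 3 → α}
    (ha : ∀ j, a j ∈ X j) {x : α} {j : ZMod 3} (hxa : x ∈ univ.image a) (hx : x ∈ X j) :
    x = a j := by
  obtain ⟨i, -, rfl⟩ := mem_image.mp hxa
  by_contra hne
  exact disjoint_left.mp (hX fun hij => hne (congrArg a hij)) (ha i) hx

lemma IsTransversal.subset_biUnion (he : IsTransversal X e) : e ⊆ univ.biUnion X := by
  obtain ⟨a, ha, rfl⟩ := he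
  intro x hx
  obtain ⟨i, -, rfl⟩ := mem_image.mp hx
  exact mem_biUnion.mpr ⟨i, mem_univ _, ha i⟩

lemma IsTransversal.exists_eq_triple (hX : Pairwise (Disjoint on X)) (he : IsTransversal X e)
    {j : ZMod 3} {x y : α} (hx : x ∈ X j) (hy : y ∈ X (j + 1)) (hxe : x ∈ e)
    (hye : y ∈ e) :
    ∃ w ∈ X (j + 2), e = {x, y, w} := by
  obtain ⟨a, ha, rfl⟩ := he
  refine ⟨a (j + 2), ha _, ?_⟩
  rw [eq_apply_of_mem_image_univ hX ha hxe hx, eq_apply_of_mem_image_univ hX ha hye hy]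
  have huniv : ∀ j : ZMod 3, ({j, j + 1, j + 2} : Finset (ZMod 3)) = univ := by decide
  rw [← huniv j]
  simp only [image_insert, image_singleton]

end Transversal

/-- `f i ∈ X i` casts `i` to `ZMod 3`: the path visits the parts cyclically. -/
structure IsPartiteTightPath (E : Finset (Finset α)) (X : ZMod 3 → Finset α) (k : ℕ)
    (f : ℕ → α) : Prop where
  mem : ∀ i < k, f i ∈ X i
  injOn : Set.InjOn f (Set.Iio k)
  edge : ∀ i, i + 2 < k → ({f i, f (i + 1), f (i + 2)} : Finset α) ∈ E

namespace IsPartiteTightPath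

variable {E E' : Finset (Finset α)} {X X' : ZMod 3 → Finset α} {k k' t : ℕ} {f : ℕ → α}

lemma mono (hf : IsPartiteTightPath E X k f) (hE : E ⊆ E') (hX : X ≤ X') (hk : k' ≤ k) :
    IsPartiteTightPath E' X' k' f where
  mem i hi := hX _ (hf.mem i (by omega))
  injOn := hf.injOn.mono (Set.Iio_subset_Iio hk)
  edge i hi := hE (hf.edge i (by omega))

lemma extend {w : α} (hf : IsPartiteTightPath E X (k + 3) f)
    (hw : w ∈ X ((k + 3 : ℕ) : ZMod 3))
    (hfresh : ∀ i < k + 3, f i ≠ w) (hwE : {f (k + 1), f (k + 2), w} ∈ E) :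
    IsPartiteTightPath E X (k + 4) (update f (k + 3) w) := by
  refine ⟨fun i hi => ?_, ?_, fun i hi => ?_⟩
  · rcases Nat.lt_succ_iff_lt_or_eq.mp hi with hi | rfl
    · rw [update_of_ne (by omega)]
      exact hf.mem i hi
    · rwa [update_self]
  · rw [show Set.Iio (k + 4) = insert (k + 3) (Set.Iio (k + 3)) by ext; simp; omega,
      Set.injOn_insert (by simp)]
    refine ⟨hf.injOn.congr fun i hi => (update_of_ne (ne_of_lt hi) _ _).symm, ?_⟩
    rintro ⟨i, hi, hieq⟩
    rw [update_self, update_of_ne (ne_of_lt hi)] at hieq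
    exact hfresh i hi hieq
  · rcases (show i + 2 < k + 3 ∨ i = k + 1 by omega) with hi | rfl
    · rw [update_of_ne (by omega), update_of_ne (by omega), update_of_ne (by omega)]
      exact hf.edge i hi
    · rwa [update_of_ne (by omega), update_of_ne (by omega), update_self]

lemma exists_extend (hX : Pairwise (Disjoint on X)) (hE : ∀ e ∈ E, IsTransversal X e)
    (hcodeg : ∀ e ∈ E, ∀ p ∈ e.powersetCard 2, t ≤ #{g ∈ E | p ⊆ g})
    (hf : IsPartiteTightPath E X (k + 3) f) (hk : k + 3 < 3 * t) :
    ∃ w, IsPartiteTightPath E X (k + 4) (update f (k + 3) w) := by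
  set x := f (k + 1)
  set y := f (k + 2)
  have hxy : x ≠ y := fun h => by
    have := hf.injOn (by simp only [Set.mem_Iio]; omega) (by simp only [Set.mem_Iio]; omega) h
    omega
  have hx : x ∈ X ((k + 1 : ℕ) : ZMod 3) := hf.mem _ (by omega)
  have hy : y ∈ X ((k + 1 : ℕ) + 1 : ZMod 3) := by
    convert hf.mem (k + 2) (by omega) using 2
    push_cast
    ring
  have hcodeg_xy : t ≤ #{g ∈ E | {x, y} ⊆ g} :=
    hcodeg _ (hf.edge k (by omega)) _ <| mem_powersetCard.mpr ⟨subset_insert _ _, card_pair hxy⟩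
  set Q := image f {i ∈ range (k + 3) | ((i : ℕ) : ZMod 3) = ((k + 3 : ℕ) : ZMod 3)}
  have hQ : #Q < t := card_image_le.trans_lt (card_filter_range_natCast_eq_self_lt hk)
  -- the `t` edges through `{x, y}` have distinct third vertices, not all of them in `Q`
  obtain ⟨w, hw, hwQ, hwE⟩ :
      ∃ w ∈ X ((k + 1 : ℕ) + 2 : ZMod 3), w ∉ Q ∧ {x, y, w} ∈ E := by
    by_contra! h
    have hsub : {g ∈ E | {x, y} ⊆ g} ⊆ Q.image fun w => {x, y, w} := by
      intro g hg
      rw [mem_filter, insert_subset_iff, singleton_subset_iff] at hg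
      obtain ⟨w, hw, rfl⟩ := (hE g hg.1).exists_eq_triple hX hx hy hg.2.1 hg.2.2
      exact mem_image_of_mem _ (of_not_not fun hwQ => h w hw hwQ hg.1)
    have := (card_le_card hsub).trans card_image_le
    omega
  have hw : w ∈ X ((k + 3 : ℕ) : ZMod 3) := by
    convert hw using 2
    push_cast
    ring
  refine ⟨w, hf.extend hw (fun i hi hiw => ?_) hwE⟩
  by_cases hik : ((i : ℕ) : ZMod 3) = ((k + 3 : ℕ) : ZMod 3)
  · exact hwQ (hiw ▸ mem_image_of_mem f (mem_filter.mpr ⟨mem_range.mpr hi, hik⟩))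
  · exact disjoint_left.mp (hX hik) (hf.mem i hi) (hiw ▸ hw)

theorem exists_of_forall_le_codegree (hX : Pairwise (Disjoint on X))
    (hE : ∀ e ∈ E, IsTransversal X e) (hne : E.Nonempty)
    (hcodeg : ∀ e ∈ E, ∀ p ∈ e.powersetCard 2, t ≤ #{g ∈ E | p ⊆ g}) :
    ∀ k ≤ 3 * t, ∃ f, IsPartiteTightPath E X k f := by
  obtain ⟨e, he⟩ := hne
  obtain ⟨a, ha, rfl⟩ := hE e he
  have hbase : IsPartiteTightPath E X 3 fun i => a i := by
    refine ⟨fun i _ => ha _, fun i hi j hj hij => ?_, fun i hi => ?_⟩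
    · have : ((i : ℕ) : ZMod 3) = j := by
        by_contra hne
        exact disjoint_left.mp (hX hne) (ha i) (hij ▸ ha j)
      rw [ZMod.natCast_eq_natCast_iff'] at this
      simp only [Set.mem_Iio] at hi hj
      omega
    · obtain rfl : i = 0 := by omega
      have huniv : ({0, 1, 2} : Finset (ZMod 3)) = univ := by decide
      rw [← huniv, image_insert, image_insert, image_singleton] at he
      simpa using he
  intro k hk
  induction k with
  | zero => exact ⟨_, hbase.mono subset_rfl le_rfl (by omega)⟩
  | succ k ih =>
    rcases le_or_gt (k + 1) 3 with hk3 | hk3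
    · exact ⟨_, hbase.mono subset_rfl le_rfl hk3⟩
    obtain ⟨k, rfl⟩ : ∃ j, k = j + 3 := ⟨k - 3, by omega⟩
    obtain ⟨f, hf⟩ := ih (by omega)
    exact ⟨_, (hf.exists_extend hX hE hcodeg (by omega)).choose_spec⟩

open scoped Classical in
theorem exists_of_choose_mul_lt (hX : Pairwise (Disjoint on X))
    (h : (#(univ.biUnion X)).choose 2 * (t - 1) < #{e ∈ E | IsTransversal X e}) :
    ∃ f, IsPartiteTightPath E X (3 * t) f := by
  obtain ⟨E', hE', hcard, hcodeg⟩ :=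
    exists_subset_forall_le_codegree t ((univ.biUnion X).powersetCard 2)
      {e ∈ E | IsTransversal X e}
      fun e he => powersetCard_mono (mem_filter.mp he).2.subset_biUnion
  rw [card_powersetCard] at hcard
  have hne : E'.Nonempty := by
    rw [← card_pos]
    omega
  obtain ⟨f, hf⟩ := exists_of_forall_le_codegree hX (fun e he => (mem_filter.mp (hE' he)).2)
    hne hcodeg _ le_rfl
  exact ⟨f, hf.mono (hE'.trans (filter_subset _ _)) le_rfl le_rfl⟩

end IsPartiteTightPath

lemma image_univ_vecCons_three (a b c : α) :
    univ.image (fun j : ZMod 3 => ![a, b, c] j) = {a, b, c} := by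
  rw [show (univ : Finset (ZMod 3)) = {0, 1, 2} by decide]
  simp [image_insert]

open scoped Classical in
lemma tripleCount_le_card_filter_isTransversal (E : Finset (Finset ℕ)) {X : ZMod 3 → Finset ℕ}
    (hX : Pairwise (Disjoint on X)) :
    tripleCount E (X 0) (X 1) (X 2) ≤ #{e ∈ E | IsTransversal X e} := by
  have hmem : ∀ {a b c}, a ∈ X 0 → b ∈ X 1 → c ∈ X 2 → ∀ j, ![a, b, c] j ∈ X j := by
    intro a b c ha hb hc j
    fin_cases j
    exacts [ha, hb, hc]
  refine card_le_card_of_injOn (fun v => {v.1, v.2.1, v.2.2}) ?_ ?_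
  · rintro ⟨a, b, c⟩ hv
    simp only [coe_filter, mem_product, Set.mem_ofPred_eq] at hv
    exact mem_filter.mpr ⟨hv.2, fun j => ![a, b, c] j, hmem hv.1.1 hv.1.2.1 hv.1.2.2,
      (image_univ_vecCons_three a b c).symm⟩
  · rintro ⟨a, b, c⟩ hv ⟨a', b', c'⟩ hv' heq
    simp only [coe_filter, mem_product, Set.mem_ofPred_eq] at hv hv'
    have hsub : ({a', b', c'} : Finset ℕ) = univ.image fun j : ZMod 3 => ![a, b, c] j := by
      rw [image_univ_vecCons_three]
      exact heq.symm
    have hmem' := hmem hv.1.1 hv.1.2.1 hv.1.2.2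
    have h0 := eq_apply_of_mem_image_univ hX hmem' (hsub ▸ by simp) hv'.1.1
    have h1 := eq_apply_of_mem_image_univ hX hmem' (hsub ▸ by simp) hv'.1.2.1
    have h2 := eq_apply_of_mem_image_univ hX hmem' (hsub ▸ by simp) hv'.1.2.2
    simp_all

lemma IsPartiteTightPath.isTightPathIn {E : Finset (Finset ℕ)} {X : ZMod 3 → Finset ℕ}
    {ℓ : ℕ} {f : ℕ → ℕ} {Vs : Finset ℕ} (hf : IsPartiteTightPath E X (ℓ + 2) f)
    (hVs : ∀ j, X j ⊆ Vs) :
    IsTightPathIn Vs E ℓ fun i => f i :=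
  ⟨fun i j h => Fin.ext (hf.injOn i.isLt j.isLt h), fun i => hVs _ (hf.mem i i.isLt),
    fun i hi => hf.edge i (by omega)⟩

theorem WeaklyQuasirandomWith.exists_isPartiteTightPath {E : Finset (Finset ℕ)} {δ d ξ : ℝ}
    {U V W : Finset ℕ} {n m t : ℕ} (hqr : WeaklyQuasirandomWith E δ d U V W)
    (hU : #U = n) (hV : #V = n) (hW : #W = n) (hd : 0 < d) (hξ : 0 ≤ ξ)
    (ht : ((t - 1 : ℕ) : ℝ) < (d * ξ ^ 3 - δ) * n / 6)
    {X : ZMod 3 → Finset ℕ} (hX : Pairwise (Disjoint on X))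
    (hXU : X 0 ⊆ U) (hXV : X 1 ⊆ V) (hXW : X 2 ⊆ W) (hXm : ∀ j, #(X j) = m)
    (hm : ξ * n ≤ m) :
    ∃ f, IsPartiteTightPath E X (3 * t) f := by
  classical
  apply IsPartiteTightPath.exists_of_choose_mul_lt hX
  have hunion : #(univ.biUnion X) = 3 * m := by
    rw [card_biUnion fun i _ j _ hij => hX hij]
    simp [hXm]
  have hmn : (m : ℝ) ≤ n := by exact_mod_cast hXm 0 ▸ hU ▸ card_le_card hXU
  have hcount : d * m ^ 3 - δ * n ^ 3 ≤ tripleCount E (X 0) (X 1) (X 2) := by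
    have := (abs_le.mp (hqr _ hXU _ hXV _ hXW)).1
    rw [hXm, hXm, hXm, hU, hV, hW] at this
    linarith
  have hξm : d * (ξ * n) ^ 3 ≤ d * m ^ 3 := by gcongr
  have hchoose : ((3 * m).choose 2 : ℝ) ≤ 9 / 2 * n ^ 2 := by
    rw [Nat.cast_choose_two]
    push_cast
    nlinarith
  rw [hunion]
  refine (Nat.cast_lt (α := ℝ)).mp (lt_of_lt_of_le ?_
    (Nat.cast_le.mpr (tripleCount_le_card_filter_isTransversal E hX)))
  have hn : (0 : ℝ) < n := by
    refine (Nat.cast_nonneg n).lt_of_ne fun h => ?_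
    rw [← h, mul_zero, zero_div] at ht
    exact (Nat.cast_nonneg _).not_gt ht
  calc (((3 * m).choose 2 * (t - 1) : ℕ) : ℝ) ≤ 9 / 2 * n ^ 2 * (t - 1 : ℕ) := by
        push_cast
        gcongr
    _ < 9 / 2 * n ^ 2 * ((d * ξ ^ 3 - δ) * n / 6) := by gcongr
    _ ≤ _ := by nlinarith

theorem exists_pairwise_disjoint_isPartiteTightPath {E : Finset (Finset α)}
    {Y : ZMod 3 → Finset α} {t : ℕ} (hY : Pairwise (Disjoint on Y)) (ht : 0 < t) (M : ℝ)
    (hround : ∀ X ≤ Y, ∀ m : ℕ, (∀ j, #(X j) = m) → M ≤ m →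
      ∃ f, IsPartiteTightPath E X (3 * t) f)
    (m : ℕ) (X : ZMod 3 → Finset α) (hXY : X ≤ Y) (hXm : ∀ j, #(X j) = m) :
    ∃ (N : ℕ) (F : Fin N → ℕ → α), (∀ i, IsPartiteTightPath E X (3 * t) (F i)) ∧
      (∀ i i', i ≠ i' → ∀ a < 3 * t, ∀ b < 3 * t, F i a ≠ F i' b) ∧
      (m : ℝ) < t * N + M := by
  induction m using Nat.strong_induction_on generalizing X with
  | _ m ih =>
  rcases lt_or_ge (m : ℝ) M with hlt | hge
  · exact ⟨0, Fin.elim0, Fin.rec0, Fin.rec0, by simpa using hlt⟩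
  obtain ⟨f, hf⟩ := hround X hXY m hXm hge
  have hX : Pairwise (Disjoint on X) := fun i j hij => (hY hij).mono (hXY i) (hXY j)
  set S := (range (3 * t)).image f
  have hXS : ∀ j, #(S ∩ X j) = t := by
    intro j
    have : S ∩ X j = {i ∈ range (3 * t) | ((i : ℕ) : ZMod 3) = j}.image f := by
      ext v
      simp only [S, mem_inter, mem_image, mem_filter, mem_range]
      constructor
      · rintro ⟨⟨i, hi, rfl⟩, hv⟩
        refine ⟨i, ⟨hi, ?_⟩, rfl⟩
        by_contra hij
        exact disjoint_left.mp (hX hij) (hf.mem i hi) hv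
      · rintro ⟨i, ⟨hi, rfl⟩, rfl⟩
        exact ⟨⟨i, hi, rfl⟩, hf.mem i hi⟩
    rw [this, card_image_of_injOn, card_filter_range_natCast_eq]
    exact hf.injOn.mono fun i hi => mem_range.mp (mem_filter.mp hi).1
  have htm : t ≤ m := hXm 0 ▸ hXS 0 ▸ card_le_card inter_subset_right
  obtain ⟨N, F, hF, hdisj, hcov⟩ := ih (m - t) (by omega) (fun j => X j \ S)
    (fun j => sdiff_subset.trans (hXY j)) (fun j => by rw [card_sdiff, hXS, hXm])
  have hFS : ∀ i, ∀ b < 3 * t, F i b ∉ S := fun i b hb => (mem_sdiff.mp ((hF i).mem b hb)).2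
  have hfS : ∀ a < 3 * t, f a ∈ S := fun a ha => mem_image_of_mem f (mem_range.mpr ha)
  refine ⟨N + 1, Fin.cons f F,
    Fin.cases hf fun i => (hF i).mono subset_rfl (fun j => sdiff_subset) le_rfl, ?_, ?_⟩
  · intro i i' hii'
    cases i using Fin.cases <;> cases i' using Fin.cases
    · exact absurd rfl hii'
    · simp only [Fin.cons_zero, Fin.cons_succ]
      exact fun a ha b hb h => hFS _ b hb (h ▸ hfS a ha)
    · simp only [Fin.cons_zero, Fin.cons_succ]
      exact fun a ha b hb h => hFS _ a ha (h ▸ hfS b hb)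
    · simp only [Fin.cons_succ]
      exact hdisj _ _ fun h => hii' (congrArg Fin.succ h)
  · rw [Nat.cast_sub htm] at hcov
    push_cast
    linarith

theorem stmt_8_general (ξ d δ : ℝ) (hξ : 0 < ξ) (hd : 0 < d) (n : ℕ)
    (hn : 1 ≤ (d * ξ ^ 3 - δ) * n / 2)
    (U V W : Finset ℕ) (hUV : Disjoint U V) (hUW : Disjoint U W) (hVW : Disjoint V W)
    (hU : U.card = n) (hV : V.card = n) (hW : W.card = n)
    (E : Finset (Finset ℕ))
    (hqr : WeaklyQuasirandomWith E δ d U V W) :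
    ∃ (N : ℕ) (ℓ : Fin N → ℕ) (P : (i : Fin N) → Fin (ℓ i + 2) → ℕ),
      (∀ i, IsTightPathIn (U ∪ V ∪ W) E (ℓ i) (P i)) ∧
      (∀ i j, i ≠ j → ∀ a b, P i a ≠ P j b) ∧
      (∀ i, (d * ξ ^ 3 - δ) * n / 2 - 2 ≤ (ℓ i : ℝ)) ∧
      (1 - ξ) * (3 * n) ≤ ∑ i, ((ℓ i : ℝ) + 2) := by
  set L := d * ξ ^ 3 - δ
  set t := ⌈L * n / 6⌉₊
  have htL : L * n / 6 ≤ t := Nat.le_ceil _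
  have ht0 : 0 < t := (Nat.cast_pos (α := ℝ)).mp (by linarith)
  have ht1 : ((t - 1 : ℕ) : ℝ) < L * n / 6 := by
    rw [Nat.cast_sub ht0, Nat.cast_one]
    linarith [Nat.ceil_lt_add_one (show 0 ≤ L * n / 6 by linarith)]
  have hℓ : ((3 * t - 2 : ℕ) : ℝ) = 3 * t - 2 := by
    rw [Nat.cast_sub (by omega)]
    push_cast
    ring
  set Y : ZMod 3 → Finset ℕ := fun j => ![U, V, W] j
  have hY : Pairwise (Disjoint on Y) := pairwise_disjoint_vecCons_three hUV hUW hVW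
  obtain ⟨N, F, hF, hdisj, hcov⟩ := exists_pairwise_disjoint_isPartiteTightPath hY ht0 (ξ * n)
    (fun X hXY m hXm hm => hqr.exists_isPartiteTightPath hU hV hW hd hξ.le ht1
      (fun i j hij => (hY hij).mono (hXY i) (hXY j)) (hXY 0) (hXY 1) (hXY 2) hXm hm)
    n Y le_rfl (fun j => by fin_cases j <;> assumption)
  refine ⟨N, fun _ => 3 * t - 2, fun i j => F i j, fun i => ?_, fun i i' hii' a b => ?_,
    fun _ => by rw [hℓ]; linarith, ?_⟩
  · refine ((hF i).mono subset_rfl le_rfl (by dsimp only; omega)).isTightPathIn fun j => ?_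
    fin_cases j <;> intro x hx <;> simp_all [Y]
  · exact hdisj i i' hii' a (by have := a.isLt; dsimp only at this; omega)
      b (by have := b.isLt; dsimp only at this; omega)
  · simp only [hℓ, sum_const, card_univ, Fintype.card_fin, nsmul_eq_mul]
    nlinarith

/-- **Good Triplets.** If `(U, V, W)` is a weakly `(δ, d)`-quasirandom triple of
disjoint `n`-sets in a 3-graph `H` with `(dξ³ − δ)n/2 ≥ 1`, then at least `(1−ξ)·3n`
vertices of `H` can be covered by pairwise vertex-disjoint tight paths, each of
length at least `(dξ³ − δ)n/2 − 2`.  (Since the paths are vertex-disjoint, the number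
of covered vertices is `∑ i, (ℓ i + 2)`.) -/
theorem stmt_8 (ξ d δ : ℝ) (hξ : 0 < ξ) (hd : 0 < d) (hδ : 0 < δ) (n : ℕ)
    (hn : 1 ≤ (d * ξ ^ 3 - δ) * n / 2)
    (U V W : Finset ℕ) (hUV : Disjoint U V) (hUW : Disjoint U W) (hVW : Disjoint V W)
    (hU : U.card = n) (hV : V.card = n) (hW : W.card = n)
    (E : Finset (Finset ℕ)) (hE : ∀ e ∈ E, e.card = 3 ∧ e ⊆ U ∪ V ∪ W)
    (hqr : WeaklyQuasirandomWith E δ d U V W) :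
    ∃ (N : ℕ) (ℓ : Fin N → ℕ) (P : (i : Fin N) → Fin (ℓ i + 2) → ℕ),
      (∀ i, IsTightPathIn (U ∪ V ∪ W) E (ℓ i) (P i)) ∧
      (∀ i j, i ≠ j → ∀ a b, P i a ≠ P j b) ∧
      (∀ i, (d * ξ ^ 3 - δ) * n / 2 - 2 ≤ (ℓ i : ℝ)) ∧
      (1 - ξ) * (3 * n) ≤ ∑ i, ((ℓ i : ℝ) + 2) :=
  stmt_8_general ξ d δ hξ hd n hn U V W hUV hUW hVW hU hV hW E hqr
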